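/- For all f, g, h ∈ F₃ the cocycle-type relation φ_{l(f)}(g ⋄ h) = φ_{l(f ⋄ g)}(h) · φ_{l(f)}(g) holds. -/

import Mathlib

open Set
open scoped Classical

noncomputable section

/-- An address: a finite word in the alphabet `{0,1,2}`. -/
abbrev Address : Type := List (Fin 3)

/-- Left endpoint of the triadic interval `I_α`. -/
def addrLeft : Address → ℝ
  | [] => 0
  | i :: α => ((i : ℕ) : ℝ) / 3 + addrLeft α / 3

/-- Length of the triadic interval `I_α`. -/
def addrLen (α : Address) : ℝ := (1 / 3 : ℝ) ^ α.length

/-- The triadic subinterval `I_α ⊆ [0,1]` determined by the address `α`. -/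
def Iaddr (α : Address) : Set ℝ := Set.Icc (addrLeft α) (addrLeft α + addrLen α)

/-- The linear orientation-preserving isomorphism `ψ_α : I_α → [0,1]`. -/
def psi (α : Address) (t : ℝ) : ℝ := (t - addrLeft α) / addrLen α

/-- The inverse `ψ_α⁻¹ : [0,1] → I_α`. -/
def psiInv (α : Address) (t : ℝ) : ℝ := addrLeft α + addrLen α * t

/-- `φ_α(f)` acts as `ψ_α⁻¹ ∘ f ∘ ψ_α` on `I_α` and as the identity elsewhere. -/
def phi (α : Address) (f : ℝ → ℝ) : ℝ → ℝ :=
  fun t => if t ∈ Iaddr α then psiInv α (f (psi α t)) else t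

/-- A triadic rational. -/
def IsTriadic (q : ℝ) : Prop := ∃ a : ℤ, ∃ n : ℕ, q = (a : ℝ) / 3 ^ n

/-- Membership in the Brown–Thompson group `F₃`, realized as piecewise-linear
homeomorphisms of `[0,1]` (extended by the identity to all of `ℝ`) with breakpoints
at triadic rationals and slopes powers of `3`. The group product is `f·g = g ∘ f`. -/
def IsF3 (f : ℝ → ℝ) : Prop :=
  (∀ t, t ∉ Set.Icc (0 : ℝ) 1 → f t = t) ∧
  Set.BijOn f (Set.Icc 0 1) (Set.Icc 0 1) ∧
  StrictMonoOn f (Set.Icc 0 1) ∧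
  ∃ breaks : Finset ℝ, (∀ b ∈ breaks, IsTriadic b) ∧
    ∀ x ∈ Set.Icc (0 : ℝ) 1, x ∉ breaks →
      ∃ (k : ℤ) (c : ℝ), IsTriadic c ∧
        ∀ᶠ y in nhdsWithin x (Set.Icc 0 1), f y = (3 : ℝ) ^ k * y + c

/-- `f` maps `I_α` linearly (preserving orientation, with triadic affine data)
onto the triadic interval `I_β`. -/
def IsTriadicLinearOn (f : ℝ → ℝ) (α β : Address) : Prop :=
  ∀ t ∈ Iaddr α, f t = psiInv β (psi α t)

/-- The depth of the maximal all-`i` leaf of the reduced domain tree of `f`: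
the least `n` such that `f` maps `I_{iⁿ}` linearly onto a triadic interval. -/
def leafExp (i : Fin 3) (f : ℝ → ℝ) : ℕ :=
  sInf {n : ℕ | ∃ β : Address, IsTriadicLinearOn f (List.replicate n i) β}

/-- The address `l(f) = 1ⁿ` of the central leaf of `f` (the leaf of the reduced
domain tree whose interval contains `1/2`). -/
def centralLeaf (f : ℝ → ℝ) : Address := List.replicate (leafExp 1 f) 1

/-- The central monoid operation `f ⋄ g = φ_{l(f)}(g) · f` (recall `a·b = b ∘ a`). -/
def diam (f g : ℝ → ℝ) : ℝ → ℝ := fun t => f (phi (centralLeaf f) g t)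

/-!
Since `φ_α` conjugates by the affine chart `ψ_α` and is the identity off `I_α`, one has
`φ_α(g ∘ k) = φ_α(g) ∘ φ_α(k)` for `k` preserving `[0,1]`, and `φ_α ∘ φ_β = φ_{αβ}`. Hence
`φ_{l(f)}(g ⋄ h) = φ_{l(f)}(g) ∘ φ_{l(f)l(g)}(h)`, and everything reduces to
`l(f ⋄ g) = l(f)l(g)`. If `f` maps `I_{l(f)}` linearly onto `I_δ`, then on `I_{l(f)1ʲ}` the map
`f ⋄ g` is `ψ_δ⁻¹ ∘ g ∘ ψ_{l(f)}`, so it is triadic-linear there exactly when `g` is triadic-linear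
on `I_{1ʲ}`. Linearity of `f ⋄ g` at a depth below `|l(f)|` would make `g` linear on all of
`[0,1]`, i.e. `g = id`, and then `f ⋄ g = f`, contradicting the minimality of `l(f)`.
-/

open Filter Topology

lemma addrLen_pos (α : Address) : 0 < addrLen α := by
  unfold addrLen; positivity

lemma psi_psiInv (α : Address) (s : ℝ) : psi α (psiInv α s) = s := by
  have := (addrLen_pos α).ne'
  unfold psi psiInv; field_simp; ring

lemma psiInv_psi (α : Address) (t : ℝ) : psiInv α (psi α t) = t := by
  have := (addrLen_pos α).ne'
  unfold psi psiInv; field_simp; ring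

lemma addrLeft_append (α β : Address) :
    addrLeft (α ++ β) = addrLeft α + addrLen α * addrLeft β := by
  induction α with
  | nil => simp [addrLeft, addrLen]
  | cons i α ih => simp [addrLeft, addrLen, ih]; ring

lemma addrLen_append (α β : Address) : addrLen (α ++ β) = addrLen α * addrLen β := by
  simp [addrLen, pow_add]

lemma psiInv_append (α β : Address) (s : ℝ) :
    psiInv (α ++ β) s = psiInv α (psiInv β s) := by
  simp only [psiInv, addrLeft_append, addrLen_append]; ring

lemma psi_append (α β : Address) (t : ℝ) : psi (α ++ β) t = psi β (psi α t) := by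
  conv_lhs => rw [← psiInv_psi α t, ← psiInv_psi β (psi α t), ← psiInv_append, psi_psiInv]

def addrNum : Address → ℕ
  | [] => 0
  | i :: α => i * 3 ^ α.length + addrNum α

lemma addrNum_lt (α : Address) : addrNum α < 3 ^ α.length := by
  induction α with
  | nil => simp [addrNum]
  | cons i α ih =>
    have hi : (i : ℕ) ≤ 2 := Nat.le_of_lt_succ i.isLt
    calc addrNum (i :: α) = i * 3 ^ α.length + addrNum α := rfl
      _ < 2 * 3 ^ α.length + 3 ^ α.length := add_lt_add_of_le_of_lt (Nat.mul_le_mul_right _ hi) ih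
      _ = 3 ^ (i :: α).length := by rw [List.length_cons, pow_succ]; ring

lemma exists_length_eq_addrNum_eq {m b : ℕ} (hb : b < 3 ^ m) :
    ∃ β : Address, β.length = m ∧ addrNum β = b := by
  induction m generalizing b with
  | zero => exact ⟨[], rfl, by simp_all [addrNum]⟩
  | succ m ih =>
    have hdigit : b / 3 ^ m < 3 := Nat.div_lt_of_lt_mul (by rwa [← pow_succ])
    obtain ⟨β, hlen, hnum⟩ := ih (Nat.mod_lt b (pow_pos three_pos m))
    refine ⟨⟨b / 3 ^ m, hdigit⟩ :: β, by simp [hlen], ?_⟩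
    simp only [addrNum, hlen, hnum]
    exact Nat.div_add_mod' b (3 ^ m)

lemma psiInv_eq_div (α : Address) (s : ℝ) :
    psiInv α s = (addrNum α + s) / 3 ^ α.length := by
  have hleft : addrLeft α = addrNum α / 3 ^ α.length := by
    induction α with
    | nil => simp [addrLeft, addrNum]
    | cons i α ih =>
      simp only [addrLeft, addrNum, ih, List.length_cons]
      push_cast; field_simp; ring
  rw [psiInv, hleft, addrLen, one_div_pow]
  ring

lemma mem_Iaddr_iff {α : Address} {t : ℝ} : t ∈ Iaddr α ↔ psi α t ∈ Icc 0 1 := by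
  have := addrLen_pos α
  simp only [Iaddr, psi, mem_Icc, le_div_iff₀ this, div_le_iff₀ this]
  constructor <;> rintro ⟨h₁, h₂⟩ <;> constructor <;> linarith

lemma psiInv_mem_Iaddr_iff {α : Address} {s : ℝ} : psiInv α s ∈ Iaddr α ↔ s ∈ Icc 0 1 := by
  rw [mem_Iaddr_iff, psi_psiInv]

lemma mem_Iaddr_append_iff {α β : Address} {t : ℝ} :
    t ∈ Iaddr (α ++ β) ↔ psi α t ∈ Iaddr β := by
  rw [mem_Iaddr_iff, mem_Iaddr_iff, psi_append]

lemma Iaddr_subset_Icc (α : Address) : Iaddr α ⊆ Icc 0 1 := by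
  intro t ht
  rw [← psiInv_psi α t, psiInv_eq_div]
  obtain ⟨hs₀, hs₁⟩ := mem_Iaddr_iff.1 ht
  have hnum : (addrNum α : ℝ) + 1 ≤ 3 ^ α.length := by exact_mod_cast addrNum_lt α
  exact ⟨by positivity, (div_le_one (by positivity)).2 (by linarith)⟩

lemma Iaddr_append_subset (α β : Address) : Iaddr (α ++ β) ⊆ Iaddr α := fun _ ht =>
  mem_Iaddr_iff.2 (Iaddr_subset_Icc β (mem_Iaddr_append_iff.1 ht))

section Phi

variable {α β : Address} {g k : ℝ → ℝ} {s t : ℝ}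

lemma phi_of_mem (ht : t ∈ Iaddr α) : phi α g t = psiInv α (g (psi α t)) := if_pos ht

lemma phi_of_not_mem (ht : t ∉ Iaddr α) : phi α g t = t := if_neg ht

lemma phi_psiInv (hs : s ∈ Icc 0 1) : phi α g (psiInv α s) = psiInv α (g s) := by
  rw [phi_of_mem (psiInv_mem_Iaddr_iff.2 hs), psi_psiInv]

lemma phi_eq_id (hg : EqOn g id (Icc 0 1)) (α : Address) : phi α g = id := by
  funext t
  by_cases ht : t ∈ Iaddr α
  · rw [phi_of_mem ht, hg (mem_Iaddr_iff.1 ht), id, psiInv_psi, id]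
  · exact phi_of_not_mem ht

lemma mapsTo_phi (hg : MapsTo g (Icc 0 1) (Icc 0 1)) (α : Address) :
    MapsTo (phi α g) (Icc 0 1) (Icc 0 1) := by
  intro t ht
  by_cases hα : t ∈ Iaddr α
  · rw [phi_of_mem hα]
    exact Iaddr_subset_Icc α (psiInv_mem_Iaddr_iff.2 (hg (mem_Iaddr_iff.1 hα)))
  · rwa [phi_of_not_mem hα]

lemma phi_comp (hk : MapsTo k (Icc 0 1) (Icc 0 1)) (α : Address) (g : ℝ → ℝ) :
    phi α (g ∘ k) = phi α g ∘ phi α k := by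
  funext t
  by_cases hα : t ∈ Iaddr α
  · simp only [Function.comp_apply, phi_of_mem hα]
    rw [phi_psiInv (hk (mem_Iaddr_iff.1 hα))]
  · simp only [Function.comp_apply, phi_of_not_mem hα]

lemma phi_phi (α β : Address) (g : ℝ → ℝ) : phi α (phi β g) = phi (α ++ β) g := by
  funext t
  by_cases hα : t ∈ Iaddr α
  · by_cases hβ : psi α t ∈ Iaddr β
    · rw [phi_of_mem hα, phi_of_mem hβ, phi_of_mem (mem_Iaddr_append_iff.2 hβ),
        psiInv_append, psi_append]
    · rw [phi_of_mem hα, phi_of_not_mem hβ, psiInv_psi,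
        phi_of_not_mem (mt mem_Iaddr_append_iff.1 hβ)]
  · rw [phi_of_not_mem hα, phi_of_not_mem fun h => hα (Iaddr_append_subset α β h)]

end Phi

section TriadicLinear

variable {f : ℝ → ℝ} {α β δ : Address}

lemma isTriadicLinearOn_iff :
    IsTriadicLinearOn f α β ↔ ∀ s ∈ Icc (0 : ℝ) 1, f (psiInv α s) = psiInv β s := by
  constructor
  · intro h s hs
    rw [h _ (psiInv_mem_Iaddr_iff.2 hs), psi_psiInv]
  · intro h t ht
    rw [← h _ (mem_Iaddr_iff.1 ht), psiInv_psi]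

lemma IsTriadicLinearOn.append (h : IsTriadicLinearOn f α β) (γ : Address) :
    IsTriadicLinearOn f (α ++ γ) (β ++ γ) := by
  rw [isTriadicLinearOn_iff] at h ⊢
  intro s hs
  rw [psiInv_append, psiInv_append, h _ (Iaddr_subset_Icc γ (psiInv_mem_Iaddr_iff.2 hs))]

lemma exists_isTriadicLinearOn_of_eq_div {m : ℕ} {b : ℤ}
    (hmaps : MapsTo f (Iaddr α) (Icc 0 1))
    (hf : ∀ s ∈ Icc (0 : ℝ) 1, f (psiInv α s) = (b + s) / 3 ^ m) :
    ∃ β, IsTriadicLinearOn f α β := by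
  have h3 : (0 : ℝ) < 3 ^ m := by positivity
  have himage : ∀ s ∈ Icc (0 : ℝ) 1, (b + s) / 3 ^ m ∈ Icc (0 : ℝ) 1 := fun s hs =>
    hf s hs ▸ hmaps (psiInv_mem_Iaddr_iff.2 hs)
  have hb₀ : (0 : ℝ) ≤ b := by
    simpa [le_div_iff₀ h3] using (himage 0 (left_mem_Icc.2 zero_le_one)).1
  have hb₁ : (b : ℝ) + 1 ≤ 3 ^ m := (div_le_one h3).1 (himage 1 (right_mem_Icc.2 zero_le_one)).2
  lift b to ℕ using (by exact_mod_cast hb₀)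
  obtain ⟨β, hlen, hnum⟩ := exists_length_eq_addrNum_eq (m := m) (b := b) (by exact_mod_cast hb₁)
  refine ⟨β, isTriadicLinearOn_iff.2 fun s hs => ?_⟩
  rw [hf s hs, psiInv_eq_div, hlen, hnum]
  push_cast; rfl

lemma exists_isTriadicLinearOn_of_psiInv_comp (hmaps : MapsTo f (Iaddr α) (Icc 0 1))
    (h : IsTriadicLinearOn (psiInv δ ∘ f) α β) : ∃ γ, IsTriadicLinearOn f α γ := by
  rw [isTriadicLinearOn_iff] at h
  have hf : ∀ s ∈ Icc (0 : ℝ) 1,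
      f (psiInv α s) = (addrNum β + s) * 3 ^ δ.length / 3 ^ β.length - addrNum δ := by
    intro s hs
    have := h s hs
    rw [Function.comp_apply, psiInv_eq_div δ, psiInv_eq_div β] at this
    field_simp at this ⊢
    linarith
  have hlen : δ.length ≤ β.length := by
    have h₀ := (hmaps (psiInv_mem_Iaddr_iff.2 (left_mem_Icc.2 zero_le_one))).1
    have h₁ := (hmaps (psiInv_mem_Iaddr_iff.2 (right_mem_Icc.2 zero_le_one))).2
    rw [hf 0 (left_mem_Icc.2 zero_le_one)] at h₀
    rw [hf 1 (right_mem_Icc.2 zero_le_one)] at h₁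
    have hslope : (3 : ℝ) ^ δ.length / 3 ^ β.length ≤ 1 := by
      have : (addrNum β + 1 : ℝ) * 3 ^ δ.length / 3 ^ β.length
          = (addrNum β + 0 : ℝ) * 3 ^ δ.length / 3 ^ β.length + 3 ^ δ.length / 3 ^ β.length := by
        ring
      linarith
    rw [div_le_one (by positivity)] at hslope
    exact (pow_le_pow_iff_right₀ (by norm_num)).1 hslope
  obtain ⟨m, hm⟩ := Nat.exists_eq_add_of_le hlen
  refine exists_isTriadicLinearOn_of_eq_div (m := m) (b := addrNum β - addrNum δ * 3 ^ m) hmaps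
    fun s hs => ?_
  rw [hf s hs, hm, pow_add]
  push_cast
  field_simp
  ring

lemma IsTriadicLinearOn.eqOn_id {γ : Address} (hbij : BijOn f (Icc 0 1) (Icc 0 1))
    (h : IsTriadicLinearOn f [] γ) : EqOn f id (Icc 0 1) := by
  have hf : ∀ s ∈ Icc (0 : ℝ) 1, f s = addrLeft γ + addrLen γ * s := fun s hs => by
    simpa [psiInv, addrLeft, addrLen] using isTriadicLinearOn_iff.1 h s hs
  have hpos := addrLen_pos γ
  obtain ⟨hleft, -⟩ := Iaddr_subset_Icc γ (left_mem_Icc.2 (by linarith) : addrLeft γ ∈ Iaddr γ)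
  obtain ⟨-, hright'⟩ := Iaddr_subset_Icc γ
    (right_mem_Icc.2 (by linarith) : addrLeft γ + addrLen γ ∈ Iaddr γ)
  obtain ⟨s₀, hs₀, hfs₀⟩ := hbij.surjOn (left_mem_Icc.2 zero_le_one)
  obtain ⟨s₁, hs₁, hfs₁⟩ := hbij.surjOn (right_mem_Icc.2 zero_le_one)
  rw [hf s₀ hs₀] at hfs₀
  rw [hf s₁ hs₁] at hfs₁
  have h₀ : addrLeft γ = 0 := by nlinarith [hs₀.1]
  have h₁ : addrLen γ = 1 := by nlinarith [hs₁.2]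
  intro s hs
  rw [hf s hs, h₀, h₁, id, zero_add, one_mul]

end TriadicLinear

def linearDepths (i : Fin 3) (f : ℝ → ℝ) : Set ℕ :=
  {n | ∃ β : Address, IsTriadicLinearOn f (List.replicate n i) β}

section LinearDepths

variable {i : Fin 3} {f : ℝ → ℝ} {n m : ℕ}

lemma mem_linearDepths_of_le (h : n ∈ linearDepths i f) (hnm : n ≤ m) :
    m ∈ linearDepths i f := by
  obtain ⟨k, rfl⟩ := Nat.exists_eq_add_of_le hnm
  obtain ⟨β, hβ⟩ := h
  exact ⟨β ++ List.replicate k i, by rw [List.replicate_add]; exact hβ.append _⟩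

lemma leafExp_le (h : n ∈ linearDepths i f) : leafExp i f ≤ n := Nat.sInf_le h

lemma leafExp_mem (h : (linearDepths i f).Nonempty) : leafExp i f ∈ linearDepths i f :=
  Nat.sInf_mem h

end LinearDepths

lemma half_not_isTriadic : ¬ IsTriadic (1 / 2 : ℝ) := by
  rintro ⟨a, n, ha⟩
  have h : ((3 : ℤ) ^ n : ℝ) = 2 * a := by
    field_simp at ha
    push_cast; linarith
  have hodd : Odd ((3 : ℤ) ^ n) := Odd.pow (by decide)
  rw [show (3 : ℤ) ^ n = 2 * a by exact_mod_cast h] at hodd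
  exact Int.not_odd_iff_even.2 (even_two_mul a) hodd

lemma half_mem_Iaddr_replicate_one (n : ℕ) : (1 / 2 : ℝ) ∈ Iaddr (List.replicate n 1) := by
  suffices psi (List.replicate n 1) (1 / 2) = 1 / 2 by
    rw [mem_Iaddr_iff, this]; norm_num
  induction n with
  | zero => simp [psi, addrLeft, addrLen]
  | succ n ih =>
    rw [List.replicate_succ', psi_append, ih]
    norm_num [psi, addrLeft, addrLen]

lemma eventually_forall_mem_Iaddr_replicate_one {P : ℝ → Prop}
    (hP : ∀ᶠ y in 𝓝[Icc 0 1] (1 / 2 : ℝ), P y) :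
    ∀ᶠ n in atTop, ∀ y ∈ Iaddr (List.replicate n 1), P y := by
  obtain ⟨ε, hε, hball⟩ := Metric.mem_nhdsWithin_iff.1 hP
  obtain ⟨n₀, hn₀⟩ := exists_pow_lt_of_lt_one hε (by norm_num : (1 / 3 : ℝ) < 1)
  refine eventually_atTop.2 ⟨n₀, fun n hn y hy => hball ⟨?_, Iaddr_subset_Icc _ hy⟩⟩
  calc dist y (1 / 2) ≤ addrLen (List.replicate n 1) := by
        simpa using Real.dist_le_of_mem_Icc hy (half_mem_Iaddr_replicate_one n)
    _ = (1 / 3) ^ n := by simp [addrLen]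
    _ ≤ (1 / 3) ^ n₀ := pow_le_pow_of_le_one (by norm_num) (by norm_num) hn
    _ < ε := hn₀

/-- In the coordinate `ψ_α` the slope is `3^(k - |α|)`; `|α| ≥ k + N` makes it and the intercept
`e / 3ᴺ` lie in `3^(k - |α|) ℤ`. -/
lemma exists_isTriadicLinearOn_of_affine {f : ℝ → ℝ} {α : Address} {k e : ℤ} {N : ℕ}
    (hmaps : MapsTo f (Iaddr α) (Icc 0 1))
    (hf : ∀ y ∈ Iaddr α, f y = (3 : ℝ) ^ k * y + e / 3 ^ N) (hdepth : k + N ≤ α.length) :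
    ∃ β, IsTriadicLinearOn f α β := by
  obtain ⟨m, hm⟩ : ∃ m : ℕ, (m : ℤ) = α.length - k := ⟨(α.length - k).toNat, by omega⟩
  have hNm : N ≤ m := by omega
  have hslope : (3 : ℝ) ^ k = 3 ^ α.length / 3 ^ m := by
    rw [show k = (α.length : ℤ) - m by omega, zpow_sub₀ (by norm_num), zpow_natCast,
      zpow_natCast]
  refine exists_isTriadicLinearOn_of_eq_div (m := m) (b := addrNum α + e * 3 ^ (m - N)) hmaps
    fun s hs => ?_
  have hsplit : (3 : ℝ) ^ m = 3 ^ (m - N) * 3 ^ N := by rw [← pow_add, Nat.sub_add_cancel hNm]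
  rw [hf _ (psiInv_mem_Iaddr_iff.2 hs), psiInv_eq_div, hslope]
  push_cast
  rw [hsplit]
  field_simp
  ring

lemma IsF3.bijOn {f : ℝ → ℝ} (hf : IsF3 f) : BijOn f (Icc 0 1) (Icc 0 1) := hf.2.1

lemma IsF3.mapsTo {f : ℝ → ℝ} (hf : IsF3 f) : MapsTo f (Icc 0 1) (Icc 0 1) := hf.bijOn.mapsTo

/-- Since `1/2` is not triadic it is not a breakpoint, so `f` is affine on a neighbourhood of
`1/2`, which contains all deep enough central intervals `I_{1ⁿ}`. -/
lemma IsF3.linearDepths_nonempty {f : ℝ → ℝ} (hf : IsF3 f) : (linearDepths 1 f).Nonempty := by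
  have hmaps : ∀ α, MapsTo f (Iaddr α) (Icc 0 1) := fun α =>
    hf.mapsTo.mono_left (Iaddr_subset_Icc α)
  obtain ⟨-, -, -, breaks, hbreaks, haffine⟩ := hf
  obtain ⟨k, c, ⟨e, N, rfl⟩, hnear⟩ := haffine (1 / 2) (by norm_num)
    fun h => half_not_isTriadic (hbreaks _ h)
  obtain ⟨n, hn, hdepth⟩ := ((eventually_forall_mem_Iaddr_replicate_one hnear).and
    (eventually_ge_atTop (k + N).toNat)).exists
  exact ⟨n, exists_isTriadicLinearOn_of_affine (hmaps _) hn
    (by simp only [List.length_replicate]; omega)⟩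

section Diam

variable {f g : ℝ → ℝ} {α β δ : Address}

lemma diam_psiInv_append (hδ : IsTriadicLinearOn f (centralLeaf f) δ)
    (hg : MapsTo g (Icc 0 1) (Icc 0 1)) {s : ℝ} (hs : s ∈ Icc (0 : ℝ) 1) :
    diam f g (psiInv (centralLeaf f ++ α) s) = psiInv δ (g (psiInv α s)) := by
  have hα : psiInv α s ∈ Icc (0 : ℝ) 1 := Iaddr_subset_Icc α (psiInv_mem_Iaddr_iff.2 hs)
  rw [diam, psiInv_append, phi_psiInv hα, isTriadicLinearOn_iff.1 hδ _ (hg hα)]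

lemma isTriadicLinearOn_diam_append_iff (hδ : IsTriadicLinearOn f (centralLeaf f) δ)
    (hg : MapsTo g (Icc 0 1) (Icc 0 1)) :
    IsTriadicLinearOn (diam f g) (centralLeaf f ++ α) β ↔
      IsTriadicLinearOn (psiInv δ ∘ g) α β := by
  simp only [isTriadicLinearOn_iff]
  exact forall₂_congr fun s hs => by rw [diam_psiInv_append hδ hg hs, Function.comp_apply]

lemma add_mem_linearDepths_diam_iff (hf : IsF3 f) (hg : IsF3 g) {j : ℕ} :
    leafExp 1 f + j ∈ linearDepths 1 (diam f g) ↔ j ∈ linearDepths 1 g := by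
  obtain ⟨δ, hδ⟩ := leafExp_mem hf.linearDepths_nonempty
  have hdepth : ∀ β, IsTriadicLinearOn (diam f g) (List.replicate (leafExp 1 f + j) 1) β ↔
      IsTriadicLinearOn (psiInv δ ∘ g) (List.replicate j 1) β := fun β => by
    rw [List.replicate_add]
    exact isTriadicLinearOn_diam_append_iff hδ hg.mapsTo
  refine (exists_congr hdepth).trans ⟨fun ⟨β, hβ⟩ => ?_, fun ⟨γ, hγ⟩ => ?_⟩
  · exact exists_isTriadicLinearOn_of_psiInv_comp (hg.mapsTo.mono_left (Iaddr_subset_Icc _)) hβ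
  · exact ⟨δ ++ γ, fun t ht => by rw [Function.comp_apply, hγ t ht, psiInv_append]⟩

lemma leafExp_diam (hf : IsF3 f) (hg : IsF3 g) :
    leafExp 1 (diam f g) = leafExp 1 f + leafExp 1 g := by
  have hmem := (add_mem_linearDepths_diam_iff hf hg).2 (leafExp_mem hg.linearDepths_nonempty)
  refine le_antisymm (leafExp_le hmem) (le_csInf ⟨_, hmem⟩ fun p hp => ?_)
  rcases le_or_gt (leafExp 1 f) p with hle | hlt
  · obtain ⟨j, rfl⟩ := Nat.exists_eq_add_of_le hle
    exact Nat.add_le_add_left (leafExp_le ((add_mem_linearDepths_diam_iff hf hg).1 hp)) _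
  · obtain ⟨γ, hγ⟩ := (add_mem_linearDepths_diam_iff hf hg (j := 0)).1
      (mem_linearDepths_of_le hp hlt.le)
    have hdiam : diam f g = f := by
      funext t
      rw [diam, phi_eq_id (hγ.eqOn_id hg.bijOn)]
      rfl
    rw [hdiam] at hp
    exact absurd (leafExp_le hp) (not_le.2 hlt)

lemma centralLeaf_diam (hf : IsF3 f) (hg : IsF3 g) :
    centralLeaf (diam f g) = centralLeaf f ++ centralLeaf g := by
  rw [centralLeaf, leafExp_diam hf hg, List.replicate_add]
  rfl

end Diam

/-- the cocycle-type relation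
`φ_{l(f)}(g ⋄ h) = φ_{l(f ⋄ g)}(h) · φ_{l(f)}(g)` (with product `a·b = b∘a`). -/
theorem phi_cocycle (f g h : ℝ → ℝ) (hf : IsF3 f) (hg : IsF3 g) (hh : IsF3 h) :
    phi (centralLeaf f) (diam g h) =
      (fun t => phi (centralLeaf f) g (phi (centralLeaf (diam f g)) h t)) := by
  rw [centralLeaf_diam hf hg, ← phi_phi]
  exact phi_comp (mapsTo_phi hh.mapsTo _) _ _
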